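/- arXiv:2012.09194 — 2 statements merged into one kernel-verified Lean document; each statement's English description precedes it below -/
import Mathlib

section
/- Let τ, ν be complex n×n matrices and X = ∑_{j,k} τ_{j,k} ν_{k,k} A_j† A_k on the fermionic Fock space of n modes. Then ‖X‖_η ≤ ‖τ‖ ‖ν‖_max η, where ‖τ‖ is the spectral norm of τ, ‖ν‖_max = max_{l,m}|ν_{l,m}|, and ‖·‖_η is the fermionic η-seminorm. -/
open Matrix
noncomputable section

/-- A fermionic occupation configuration on `n` modes. -/
abbrev Config (n : ℕ) := Fin n → Bool

/-- The fermionic Fock space on `n` modes. -/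
abbrev Fock (n : ℕ) := EuclideanSpace ℂ (Config n)

/-- Hamming weight (number of occupied modes) of a configuration. -/
def wt {n : ℕ} (c : Config n) : ℕ := (Finset.univ.filter fun k => c k = true).card

/-- The Jordan–Wigner sign `(-1)^{∑_{k<j} c_k}`. -/
def signFactor {n : ℕ} (j : Fin n) (c : Config n) : ℂ :=
  (-1 : ℂ) ^ ((Finset.univ.filter fun k => k < j ∧ c k = true).card)

/-- The fermionic creation operator `A_j†`, as a matrix in the occupation basis. -/
def createM {n : ℕ} (j : Fin n) : Matrix (Config n) (Config n) ℂ :=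
  Matrix.of fun c' c =>
    if c j = false ∧ c' = Function.update c j true then signFactor j c else 0

/-- The fermionic annihilation operator `A_j`, the Hermitian adjoint of `A_j†`. -/
def annM {n : ℕ} (j : Fin n) : Matrix (Config n) (Config n) ℂ := (createM j)ᴴ

/-- The occupation-number operator `N_j = A_j† A_j`. -/
def numM {n : ℕ} (j : Fin n) : Matrix (Config n) (Config n) ℂ := createM j * annM j

/-- The particle-number operator `N = ∑_j N_j`. -/
def totalNumM (n : ℕ) : Matrix (Config n) (Config n) ℂ := ∑ j, numM j

/-- Orthogonal projection `Π_η` onto the `η`-electron subspace. -/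
def projM (n η : ℕ) : Matrix (Config n) (Config n) ℂ :=
  Matrix.of fun c' c => if c' = c ∧ wt c = η then 1 else 0

/-- An operator is number-preserving iff it commutes with every `Π_η`. -/
def NumberPreserving {n : ℕ} (X : Matrix (Config n) (Config n) ℂ) : Prop :=
  ∀ η : ℕ, projM n η * X = X * projM n η

/-- Apply a matrix to a Fock-space vector, as a continuous linear map. -/
def appM {n : ℕ} (A : Matrix (Config n) (Config n) ℂ) : Fock n →L[ℂ] Fock n :=
  Matrix.toEuclideanCLM (𝕜 := ℂ) A

/-- Spectral norm of a matrix (operator norm on the Euclidean space). -/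
def specNorm {m : Type*} [Fintype m] [DecidableEq m] (A : Matrix m m ℂ) : ℝ :=
  ‖Matrix.toEuclideanCLM (𝕜 := ℂ) A‖

/-- The fermionic `η`-seminorm `‖X‖_η = ‖X Π_η‖`. -/
def fsem {n : ℕ} (η : ℕ) (X : Matrix (Config n) (Config n) ℂ) : ℝ :=
  specNorm (X * projM n η)

/-- Max-norm: largest matrix entry in absolute value. -/
def maxNorm {m : Type*} [Fintype m] (A : Matrix m m ℂ) : ℝ := ⨆ i, ⨆ j, ‖A i j‖

/-!
With `w = τ * diagonal (fun k => ν k k)` we have `X = ∑ w_{jk} A_j† A_k` and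
`‖w‖ ≤ ‖τ‖ ‖ν‖_max`. Stacking the annihilators into `B = (A_k)_k : F → ℂⁿ ⊗ F`, with `F` the
Fock space, gives `X = B† (w ⊗ 1) B` and `B† B = N`. Since `X` conserves particle number,
`X Π_η = (B Π_η)† (w ⊗ 1) (B Π_η)`, and the C⋆-identity gives `‖B Π_η‖² = ‖Π_η N Π_η‖ = η`;
finally `‖w ⊗ 1‖ ≤ ‖w‖` because `w ↦ w ⊗ 1` is a ⋆-homomorphism.
-/

open scoped Matrix.Norms.L2Operator Kronecker

namespace Matrix

variable {ι m o l R : Type*}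

def stackRows (A : ι → Matrix m l R) : Matrix (ι × m) l R := of fun p c => A p.1 p.2 c

lemma conjTranspose_stackRows_mul_kronecker_one_mul [Fintype ι] [Fintype m] [DecidableEq m]
    [CommSemiring R] [StarRing R] (w : Matrix ι ι R) (A : ι → Matrix m l R) :
    (stackRows A)ᴴ * (w ⊗ₖ (1 : Matrix m m R)) * stackRows A =
      ∑ j, ∑ k, w j k • ((A j)ᴴ * A k) := by
  ext c' c
  simp only [stackRows, mul_apply, conjTranspose_apply, of_apply, kroneckerMap_apply, one_apply,
    mul_ite, mul_one, mul_zero, Fintype.sum_prod_type, Finset.sum_ite_eq', Finset.mem_univ,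
    if_true, Finset.sum_mul, sum_apply, smul_apply, smul_eq_mul, Finset.mul_sum]
  simp_rw [Finset.sum_comm (γ := m) (α := ι)]
  rw [Finset.sum_comm]
  exact Fintype.sum_congr _ _ fun j => Fintype.sum_congr _ _ fun k =>
    Fintype.sum_congr _ _ fun a => by ring

lemma conjTranspose_stackRows_mul_self [Fintype ι] [DecidableEq ι] [Fintype m] [DecidableEq m]
    [CommSemiring R] [StarRing R] (A : ι → Matrix m l R) :
    (stackRows A)ᴴ * stackRows A = ∑ k, (A k)ᴴ * A k := by
  simpa [one_apply] using conjTranspose_stackRows_mul_kronecker_one_mul 1 A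

variable (m o R) in
def kroneckerOneStarAlgHom [Fintype m] [DecidableEq m] [Fintype o] [DecidableEq o]
    [CommSemiring R] [StarRing R] : Matrix m m R →⋆ₐ[R] Matrix (m × o) (m × o) R where
  toFun w := w ⊗ₖ 1
  map_one' := one_kronecker_one
  map_mul' a b := by rw [← mul_kronecker_mul, mul_one]
  map_zero' := zero_kronecker _
  map_add' a b := add_kronecker a b 1
  commutes' r := by
    simp only [Algebra.algebraMap_eq_smul_one, smul_kronecker, one_kronecker_one]
  map_star' a := by
    simp only [star_eq_conjTranspose, conjTranspose_kronecker, conjTranspose_one]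

lemma norm_kronecker_one_le [Fintype m] [DecidableEq m] [Fintype o] [DecidableEq o]
    (w : Matrix m m ℂ) : ‖w ⊗ₖ (1 : Matrix o o ℂ)‖ ≤ ‖w‖ :=
  NonUnitalStarAlgHom.norm_apply_le (kroneckerOneStarAlgHom m o ℂ) w

lemma norm_diagonal_le [Fintype m] [DecidableEq m] {d : m → ℂ} {C : ℝ} (hC : 0 ≤ C)
    (hd : ∀ i, ‖d i‖ ≤ C) : ‖diagonal d‖ ≤ C := by
  rw [l2_opNorm_diagonal]
  exact pi_norm_le_iff_of_nonneg hC |>.mpr hd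

end Matrix

lemma maxNorm_nonneg {m : Type*} [Fintype m] (A : Matrix m m ℂ) : 0 ≤ maxNorm A :=
  Real.iSup_nonneg fun _ => Real.iSup_nonneg fun _ => norm_nonneg _

lemma norm_apply_le_maxNorm {m : Type*} [Fintype m] (A : Matrix m m ℂ) (i j : m) :
    ‖A i j‖ ≤ maxNorm A :=
  (le_ciSup (Set.finite_range _).bddAbove j).trans
    (le_ciSup (f := fun i => ⨆ j, ‖A i j‖) (Set.finite_range _).bddAbove i)

lemma specNorm_eq_norm {m : Type*} [Fintype m] [DecidableEq m] (A : Matrix m m ℂ) :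
    specNorm A = ‖A‖ := rfl

def annStack (n : ℕ) : Matrix (Fin n × Config n) (Config n) ℂ := stackRows annM

section Fermion

variable {n : ℕ}

lemma wt_update_true {c : Config n} {j : Fin n} (h : c j = false) :
    wt (Function.update c j true) = wt c + 1 := by
  have : (Finset.univ.filter fun k => Function.update c j true k = true) =
      insert j (Finset.univ.filter fun k => c k = true) := by
    ext k
    by_cases hk : k = j <;> simp [Function.update_apply, hk]
  rw [wt, this, Finset.card_insert_of_notMem (by simp [h]), wt]

lemma wt_eq_of_createM_apply_ne_zero {j : Fin n} {c' c : Config n} (h : createM j c' c ≠ 0) :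
    wt c' = wt c + 1 := by
  simp only [createM, of_apply, ne_eq, ite_eq_right_iff, Classical.not_imp] at h
  rw [h.1.2, wt_update_true h.1.1]

lemma createM_mul_annM_apply_eq_zero (j k : Fin n) {c' c : Config n} (h : wt c' ≠ wt c) :
    (createM j * annM k) c' c = 0 := by
  rw [mul_apply]
  refine Finset.sum_eq_zero fun a _ => ?_
  by_contra hne
  obtain ⟨hj, hk⟩ := mul_ne_zero_iff.mp hne
  rw [annM, conjTranspose_apply, star_ne_zero] at hk
  exact h (by rw [wt_eq_of_createM_apply_ne_zero hj, wt_eq_of_createM_apply_ne_zero hk])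

lemma projM_eq_diagonal (η : ℕ) : projM n η = diagonal fun c => if wt c = η then 1 else 0 := by
  ext c' c
  by_cases h : c' = c <;> simp [projM, h]

lemma numM_eq_diagonal (j : Fin n) : numM j = diagonal fun c => if c j = true then 1 else 0 := by
  ext c' c
  simp only [numM, annM, createM, mul_apply, conjTranspose_apply, of_apply, diagonal_apply]
  rw [Finset.sum_eq_single (Function.update c' j false)]
  · by_cases hc' : c' j = true
    · have hup : Function.update (Function.update c' j false) j true = c' := by simp [hc']
      by_cases hcc : c' = c
      · subst hcc
        simp [hup, hc', signFactor, ← mul_pow]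
      · simp [hup, Ne.symm hcc, hcc]
    · simp [hc']
  · rintro a - ha
    rw [if_neg, zero_mul]
    rintro ⟨haj, rfl⟩
    exact ha (by simp [haj])
  · simp

lemma totalNumM_eq_diagonal : totalNumM n = diagonal fun c => (wt c : ℂ) := by
  ext c' c
  simp only [totalNumM, numM_eq_diagonal, Matrix.sum_apply, diagonal_apply]
  split_ifs <;> simp [wt, Finset.sum_boole]

lemma totalNumM_mul_projM (η : ℕ) : totalNumM n * projM n η = (η : ℂ) • projM n η := by
  rw [totalNumM_eq_diagonal, projM_eq_diagonal, diagonal_mul_diagonal, ← diagonal_smul]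
  congr 1
  ext c
  split_ifs with h <;> simp [h]

lemma conjTranspose_projM (η : ℕ) : (projM n η)ᴴ = projM n η := by
  simp [projM_eq_diagonal, diagonal_conjTranspose, Pi.star_def, apply_ite star]

lemma projM_mul_self (η : ℕ) : projM n η * projM n η = projM n η := by
  rw [projM_eq_diagonal, diagonal_mul_diagonal]
  congr 1
  ext c
  split_ifs <;> simp

lemma norm_projM_le_one (η : ℕ) : ‖projM n η‖ ≤ 1 := by
  rw [projM_eq_diagonal]
  refine norm_diagonal_le zero_le_one fun c => ?_
  split_ifs <;> simp

lemma numberPreserving_of_apply_eq_zero {X : Matrix (Config n) (Config n) ℂ}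
    (hX : ∀ c' c, wt c' ≠ wt c → X c' c = 0) : NumberPreserving X := by
  intro η
  ext c' c
  rw [projM_eq_diagonal, diagonal_mul, mul_diagonal]
  by_cases h : wt c' = wt c
  · rw [h, mul_comm]
  · simp [hX c' c h]

lemma numberPreserving_sum_createM_mul_annM (w : Matrix (Fin n) (Fin n) ℂ) :
    NumberPreserving (∑ j, ∑ k, w j k • (createM j * annM k)) :=
  numberPreserving_of_apply_eq_zero fun c' c h => by
    simp [Matrix.sum_apply, createM_mul_annM_apply_eq_zero _ _ h]

lemma NumberPreserving.mul_projM_eq {X : Matrix (Config n) (Config n) ℂ} (hX : NumberPreserving X)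
    (η : ℕ) : X * projM n η = projM n η * X * projM n η := by
  rw [hX η, mul_assoc, projM_mul_self]

lemma conjTranspose_annStack_mul_self : (annStack n)ᴴ * annStack n = totalNumM n := by
  rw [annStack, conjTranspose_stackRows_mul_self]
  simp [totalNumM, numM, annM]

lemma sum_createM_mul_annM_eq (w : Matrix (Fin n) (Fin n) ℂ) :
    ∑ j, ∑ k, w j k • (createM j * annM k) =
      (annStack n)ᴴ * (w ⊗ₖ (1 : Matrix (Config n) (Config n) ℂ)) * annStack n := by
  rw [annStack, conjTranspose_stackRows_mul_kronecker_one_mul]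
  simp [annM]

lemma norm_sum_createM_mul_annM_mul_projM_le (w : Matrix (Fin n) (Fin n) ℂ) (η : ℕ) :
    ‖(∑ j, ∑ k, w j k • (createM j * annM k)) * projM n η‖ ≤ ‖w‖ * η := by
  set B : Matrix (Fin n × Config n) (Config n) ℂ := annStack n * projM n η
  set W : Matrix (Fin n × Config n) (Fin n × Config n) ℂ := w ⊗ₖ 1
  have hBB : Bᴴ * B = (η : ℂ) • projM n η := by
    rw [conjTranspose_mul, conjTranspose_projM, Matrix.mul_assoc, ← Matrix.mul_assoc (annStack n)ᴴ,
      conjTranspose_annStack_mul_self, totalNumM_mul_projM, mul_smul_comm, projM_mul_self]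
  calc ‖(∑ j, ∑ k, w j k • (createM j * annM k)) * projM n η‖
      = ‖projM n η * (∑ j, ∑ k, w j k • (createM j * annM k)) * projM n η‖ := by
        rw [(numberPreserving_sum_createM_mul_annM w).mul_projM_eq]
    _ = ‖Bᴴ * W * B‖ := by
        rw [sum_createM_mul_annM_eq, conjTranspose_mul, conjTranspose_projM]
        simp only [B, W, Matrix.mul_assoc]
    _ ≤ ‖Bᴴ‖ * ‖W‖ * ‖B‖ :=
        (l2_opNorm_mul _ _).trans (mul_le_mul_of_nonneg_right (l2_opNorm_mul _ _) (norm_nonneg _))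
    _ = ‖W‖ * ‖Bᴴ * B‖ := by
        rw [l2_opNorm_conjTranspose, l2_opNorm_conjTranspose_mul_self]
        ring
    _ ≤ ‖w‖ * (η * ‖projM n η‖) := by
        rw [hBB, norm_smul, Complex.norm_natCast]
        gcongr
        exact norm_kronecker_one_le w
    _ ≤ ‖w‖ * η := by
        gcongr
        exact mul_le_of_le_one_right (Nat.cast_nonneg _) (norm_projM_le_one η)

end Fermion

/-- **Seminorm bound for `∑_{j,k} τ_{j,k} ν_{k,k} A_j† A_k`:**
`‖X‖_η ≤ ‖τ‖ ‖ν‖_max η`. -/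
theorem fsem_bound_second_term {n η : ℕ}
    (τ ν : Matrix (Fin n) (Fin n) ℂ) :
    fsem η (∑ j, ∑ k, (τ j k * ν k k) • (createM j * annM k)) ≤
      specNorm τ * maxNorm ν * (η : ℝ) := by
  have hX : ∑ j, ∑ k, (τ j k * ν k k) • (createM j * annM k) =
      ∑ j, ∑ k, (τ * diagonal fun k => ν k k) j k • (createM j * annM k) := by
    simp only [mul_diagonal]
  have hdiag : ‖(diagonal fun k => ν k k : Matrix (Fin n) (Fin n) ℂ)‖ ≤ maxNorm ν :=
    norm_diagonal_le (maxNorm_nonneg ν) fun k => norm_apply_le_maxNorm ν k k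
  calc fsem η (∑ j, ∑ k, (τ j k * ν k k) • (createM j * annM k))
      ≤ ‖τ * diagonal fun k => ν k k‖ * η := by
        rw [fsem, hX, specNorm_eq_norm]
        exact norm_sum_createM_mul_annM_mul_projM_le _ η
    _ ≤ specNorm τ * maxNorm ν * η := by
        rw [specNorm_eq_norm]
        gcongr
        exact (l2_opNorm_mul _ _).trans (by gcongr)
end
end

section
/- Sparse path-counting bound: let H = T + V with T = ∑_{j,k} τ_{j,k} A_j†A_k and V = ∑_{l,m} ν_{l,m} N_l N_m on n fermionic modes, where each row and column of τ and ν has at most d nonzero entries. Fix γ ∈ {0,1}^{p+1} and consider all fermionic paths P arising in the full expansion of the nested commutator [H_{γ_{p+1}}, …, [H_{γ₂}, H_{γ₁}]] (H₀ = V, H₁ = T) into signed products of elementary fermionic operators, summed over all index tuples with nonzero coefficients. Then for any η-electron configuration c, ∑_{index tuples} ∑_{paths P} ‖P |c⟩‖ = O(η d^{p+1}), where the implied constant depends only on p; in particular at most O(η d^{p+1}) paths act nonzero on |c⟩. -/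
/-!
Each elementary operator, hence each path `P`, sends a basis vector `|c⟩` to a multiple of modulus
at most one of a basis vector, so `‖P|c⟩‖ ≤ 1`. The rightmost operator of every path is some `A_r`
or `N_r` (true for `H_{jk}` and preserved by every commutator), so `‖P|c⟩‖ = 0` unless `r` is one
of the `η` occupied sites of `c`. It remains to bound the number `C_m(r)` of pairs (admissible index
tuple, path) of depth `m` whose path ends at a fixed site `r`.

When `[H_{jk}, ·]` hits a non-final operator of a path (of length at most `m + 2`), the end site is
kept, and each operator admits at most `2d` pairs `(j, k)`. When it hits the final operator `A_{r'}`
or `N_{r'}`, the new end is `r'` itself (at most `d` pairs) or `k` with `j = r'`. Hence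
`C_{m+1}(r) ≤ 2d(m+2) C_m(r) + ∑_{(r', r) admissible} C_m(r')`, and `C_m(r) ≤ (2m+3)^m d^{m+1}`.
-/

open Matrix
noncomputable section

open scoped Classical

/-- Elementary fermionic operators: creation, annihilation, occupation number. -/
inductive FOp (n : ℕ) : Type
  | create (j : Fin n)
  | ann (j : Fin n)
  | num (j : Fin n)

/-- Interpret an elementary fermionic operator as a matrix. -/
def FOp.toM {n : ℕ} : FOp n → Matrix (Config n) (Config n) ℂ
  | .create j => createM j
  | .ann j => annM j
  | .num j => numM j

/-- A fermionic path: a sign (`true` = `-1`) together with a product of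
elementary fermionic operators (leftmost first). -/
abbrev FPath (n : ℕ) := Bool × List (FOp n)

/-- Interpret a fermionic path as a matrix. -/
def FPath.toM {n : ℕ} (P : FPath n) : Matrix (Config n) (Config n) ℂ :=
  (if P.1 then (-1 : ℂ) else 1) • (P.2.map FOp.toM).prod

/-- The commutator of `H^γ_{jk}` (`γ = true`: `A_j†A_k`; `γ = false`: `N_jN_k`)
with a single elementary fermionic operator, expanded as a list of signed
products via the standard commutation relations. -/
def commOp {n : ℕ} (γ : Bool) (j k : Fin n) : FOp n → List (Bool × List (FOp n))
  | .create j' =>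
      if γ then (if k = j' then [(false, [FOp.create j])] else [])
      else (if k = j' then [(false, [FOp.num j, FOp.create j'])] else []) ++
           (if j = j' then [(false, [FOp.create j', FOp.num k])] else [])
  | .ann k' =>
      if γ then (if k' = j then [(true, [FOp.ann k])] else [])
      else (if k = k' then [(true, [FOp.num j, FOp.ann k'])] else []) ++
           (if j = k' then [(true, [FOp.ann k', FOp.num k])] else [])
  | .num l =>
      if γ then (if k = l then [(false, [FOp.create j, FOp.ann k])] else []) ++
                (if j = l then [(true, [FOp.create j, FOp.ann k])] else [])
      else []

/-- The commutator of `H^γ_{jk}` with a product of elementary operators,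
obtained via the Leibniz rule `[X, Y₁⋯Y_r] = ∑ Y₁⋯[X,Y_i]⋯Y_r`. -/
def commList {n : ℕ} (γ : Bool) (j k : Fin n) :
    List (FOp n) → List (Bool × List (FOp n))
  | [] => []
  | X :: rest =>
      ((commOp γ j k X).map fun p => (p.1, p.2 ++ rest)) ++
      ((commList γ j k rest).map fun p => (p.1, X :: p.2))

/-- The commutator of `H^γ_{jk}` with a fermionic path. -/
def commPath {n : ℕ} (γ : Bool) (j k : Fin n) (P : FPath n) : List (FPath n) :=
  (commList γ j k P.2).map fun p => (xor P.1 p.1, p.2)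

/-- The innermost term `H^γ_{jk}` as a fermionic path. -/
def basePath {n : ℕ} (γ : Bool) (j k : Fin n) : FPath n :=
  (false, if γ then [FOp.create j, FOp.ann k] else [FOp.num j, FOp.num k])

/-- Expansion of the nested commutator
`[H^{γ_{p+1}}_{j_{p+1}k_{p+1}}, …, [H^{γ₂}_{j₂k₂}, H^{γ₁}_{j₁k₁}]]` into
fermionic paths, the list of `(γ_q, (j_q, k_q))` being given outermost first. -/
def expandNested {n : ℕ} : List (Bool × Fin n × Fin n) → List (FPath n)
  | [] => []
  | [(γ, j, k)] => [basePath γ j k]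
  | (γ, j, k) :: rest => (expandNested rest).flatMap (commPath γ j k)


lemma List.sum_map_flatMap {α β M : Type*} [AddCommMonoid M] (φ : β → M) (g : α → List β)
    (l : List α) : ((l.flatMap g).map φ).sum = (l.map fun x => ((g x).map φ).sum).sum := by
  simp only [List.flatMap, List.map_flatten, List.sum_flatten, List.map_map]
  rfl

lemma Fintype.sum_piFinset_eq_sum_snoc {M β : Type*} [AddCommMonoid M] {m : ℕ}
    (S : Fin (m + 1) → Finset β) (F : (Fin (m + 1) → β) → M) :
    ∑ f ∈ Fintype.piFinset S, F f =
      ∑ x ∈ S (Fin.last m), ∑ g ∈ Fintype.piFinset (Fin.init S), F (Fin.snoc g x) := by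
  have h := Finset.filter_piFinset_eq_map_snocEquiv S (fun _ => True)
  simp only [Finset.filter_true_of_mem fun _ _ => trivial] at h
  rw [h, Finset.sum_map, Finset.sum_product]
  rfl

/-- The separate `DecidablePred` argument lets the lemma match whatever instance decides the `if`. -/
lemma Fintype.sum_ite_forall_eq_sum_piFinset {ι β M : Type*} [Fintype ι] [DecidableEq ι]
    [Fintype β] [AddCommMonoid M] (p : ι → β → Prop)
    [∀ i b, Decidable (p i b)] [DecidablePred fun f : ι → β => ∀ i, p i (f i)]
    (F : (ι → β) → M) :
    ∑ f : ι → β, (if ∀ i, p i (f i) then F f else 0) =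
      ∑ f ∈ Fintype.piFinset fun i => Finset.univ.filter (p i), F f := by
  rw [← Finset.sum_filter]
  exact Finset.sum_congr (by ext; simp) fun _ _ => rfl

lemma Function.eq_update_of_eq_update {α β : Type*} [DecidableEq α] {f g : α → β} {a : α}
    {b : β} (h : f = Function.update g a b) : g = Function.update f a (g a) := by
  subst h
  rw [Function.update_idem, Function.update_eq_self]

variable {n : ℕ}

lemma appM_single_apply (A : Matrix (Config n) (Config n) ℂ) (c c' : Config n) :
    appM A (EuclideanSpace.single c 1) c' = A c' c := by
  rw [appM, Matrix.ofLp_toEuclideanCLM]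
  simp [Matrix.mulVec, dotProduct, PiLp.single_apply]

lemma appM_mul (A B : Matrix (Config n) (Config n) ℂ) (x : Fock n) :
    appM (A * B) x = appM A (appM B x) := by
  rw [appM, map_mul]
  rfl

lemma appM_smul (a : ℂ) (A : Matrix (Config n) (Config n) ℂ) (x : Fock n) :
    appM (a • A) x = a • appM A x := by
  rw [appM, map_smul]
  rfl

lemma appM_single_eq_zero {A : Matrix (Config n) (Config n) ℂ} {c : Config n}
    (h : ∀ c', A c' c = 0) : appM A (EuclideanSpace.single c 1) = 0 := by
  ext c'
  rw [appM_single_apply, h]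
  rfl

def IsContractiveMonomial (A : Matrix (Config n) (Config n) ℂ) : Prop :=
  ∀ c, ∃ (s : ℂ) (c' : Config n), ‖s‖ ≤ 1 ∧
    appM A (EuclideanSpace.single c 1) = s • EuclideanSpace.single c' 1

namespace IsContractiveMonomial

lemma of_column {A : Matrix (Config n) (Config n) ℂ}
    (h : ∀ c, ∃ c', ‖A c' c‖ ≤ 1 ∧ ∀ c'', c'' ≠ c' → A c'' c = 0) :
    IsContractiveMonomial A := by
  intro c
  obtain ⟨c', hnorm, hzero⟩ := h c
  refine ⟨A c' c, c', hnorm, ?_⟩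
  ext c''
  rw [appM_single_apply]
  by_cases hc : c'' = c'
  · subst hc; simp
  · simp [hc, hzero c'' hc]

lemma one : IsContractiveMonomial (1 : Matrix (Config n) (Config n) ℂ) :=
  of_column fun c => ⟨c, by simp, fun _ h => Matrix.one_apply_ne h⟩

lemma mul {A B : Matrix (Config n) (Config n) ℂ} (hA : IsContractiveMonomial A)
    (hB : IsContractiveMonomial B) : IsContractiveMonomial (A * B) := by
  intro c
  obtain ⟨s, c', hs, hBc⟩ := hB c
  obtain ⟨t, c'', ht, hAc⟩ := hA c'
  refine ⟨s * t, c'', ?_, ?_⟩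
  · simpa using mul_le_one₀ hs (norm_nonneg t) ht
  · rw [appM_mul, hBc, map_smul, hAc, smul_smul]

lemma smul {A : Matrix (Config n) (Config n) ℂ} (hA : IsContractiveMonomial A) {a : ℂ}
    (ha : ‖a‖ ≤ 1) : IsContractiveMonomial (a • A) := by
  intro c
  obtain ⟨s, c', hs, hAc⟩ := hA c
  refine ⟨a * s, c', ?_, ?_⟩
  · simpa using mul_le_one₀ ha (norm_nonneg s) hs
  · rw [appM_smul, hAc, smul_smul]

lemma norm_appM_single_le {A : Matrix (Config n) (Config n) ℂ} (hA : IsContractiveMonomial A)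
    (c : Config n) : ‖appM A (EuclideanSpace.single c 1)‖ ≤ 1 := by
  obtain ⟨s, c', hs, hAc⟩ := hA c
  simpa [hAc, norm_smul] using hs

end IsContractiveMonomial

lemma norm_signFactor (j : Fin n) (c : Config n) : ‖signFactor j c‖ = 1 := by
  simp [signFactor]

lemma isContractiveMonomial_createM (j : Fin n) : IsContractiveMonomial (createM j) := by
  refine .of_column fun c => ⟨Function.update c j true, ?_, fun c'' hc'' => ?_⟩
  · simp only [createM, Matrix.of_apply]
    split_ifs <;> simp [norm_signFactor]
  · simp [createM, hc'']

lemma annM_apply (j : Fin n) (c' c : Config n) :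
    annM j c' c = if c' j = false ∧ c = Function.update c' j true then
      (starRingEnd ℂ) (signFactor j c') else 0 := by
  simp only [annM, Matrix.conjTranspose_apply, createM, Matrix.of_apply]
  split_ifs <;> simp

lemma isContractiveMonomial_annM (j : Fin n) : IsContractiveMonomial (annM j) := by
  refine .of_column fun c => ⟨Function.update c j false, ?_, fun c'' hc'' => ?_⟩
  · rw [annM_apply]
    split_ifs <;> simp [norm_signFactor]
  · rw [annM_apply, if_neg]
    rintro ⟨hj, h⟩
    exact hc'' (hj ▸ Function.eq_update_of_eq_update h)

lemma annM_apply_eq_zero_of_unoccupied {j : Fin n} {c : Config n} (hc : c j = false)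
    (c' : Config n) :
    annM j c' c = 0 := by
  rw [annM_apply, if_neg]
  rintro ⟨-, rfl⟩
  simp at hc

lemma isContractiveMonomial_numM (j : Fin n) : IsContractiveMonomial (numM j) :=
  (isContractiveMonomial_createM j).mul (isContractiveMonomial_annM j)

lemma FPath.isContractiveMonomial_toM (P : FPath n) : IsContractiveMonomial P.toM := by
  refine .smul ?_ (by split_ifs <;> simp)
  induction P.2 with
  | nil => exact .one
  | cons X w ih =>
    refine .mul ?_ ih
    cases X
    exacts [isContractiveMonomial_createM _, isContractiveMonomial_annM _,
      isContractiveMonomial_numM _]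

def FOp.site : FOp n → Fin n
  | .create j | .ann j | .num j => j

/-- `X |c⟩ = 0` whenever `c` leaves this site empty; creation operators have none. -/
def FOp.annihilationSite : FOp n → Option (Fin n)
  | .create _ => none
  | .ann j | .num j => some j

def endSite (w : List (FOp n)) : Option (Fin n) := w.getLast?.bind FOp.annihilationSite

lemma endSite_eq_some_iff {w : List (FOp n)} {r : Fin n} :
    endSite w = some r ↔ ∃ u Y, w = u ++ [Y] ∧ Y.annihilationSite = some r := by
  simp only [endSite, Option.bind_eq_some_iff, List.getLast?_eq_some_iff]
  aesop

lemma endSite_append_of_ne_nil (u : List (FOp n)) {v : List (FOp n)} (hv : v ≠ []) :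
    endSite (u ++ v) = endSite v := by
  cases h : v.getLast? with
  | none => exact absurd (List.getLast?_eq_none_iff.mp h) hv
  | some a => simp [endSite, h]

lemma FOp.appM_toM_single_eq_zero {X : FOp n} {r : Fin n} (hX : X.annihilationSite = some r)
    {c : Config n} (hc : c r = false) : appM X.toM (EuclideanSpace.single c 1) = 0 := by
  have hann : appM (annM r) (EuclideanSpace.single c 1) = 0 :=
    appM_single_eq_zero (annM_apply_eq_zero_of_unoccupied hc)
  cases X <;> simp only [FOp.annihilationSite, Option.some.injEq, reduceCtorEq] at hX <;> subst hX
  · exact hann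
  · rw [FOp.toM, numM, appM_mul, hann, map_zero]

lemma FPath.appM_toM_single_eq_zero {P : FPath n} {r : Fin n} (hP : endSite P.2 = some r)
    {c : Config n} (hc : c r = false) : appM P.toM (EuclideanSpace.single c 1) = 0 := by
  obtain ⟨u, Y, hw, hY⟩ := endSite_eq_some_iff.mp hP
  rw [FPath.toM, appM_smul, hw, List.map_append, List.prod_append, appM_mul]
  simp [FOp.appM_toM_single_eq_zero hY hc]

section CommutatorShape

variable {γ : Bool} {j k : Fin n}

lemma commList_append (u v : List (FOp n)) :
    commList γ j k (u ++ v) =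
      (commList γ j k u).map (fun q => (q.1, q.2 ++ v)) ++
        (commList γ j k v).map (fun q => (q.1, u ++ q.2)) := by
  induction u with
  | nil => simp [commList]
  | cons X u ih => simp [commList, ih, Function.comp_def]

lemma length_commOp_le (X : FOp n) :
    (commOp γ j k X).length ≤ (if j = X.site then 1 else 0) + (if k = X.site then 1 else 0) := by
  cases X <;> cases γ <;> simp only [commOp, FOp.site] <;> split_ifs <;> simp_all

lemma ne_nil_of_mem_commOp {X : FOp n} {q : FPath n} (hq : q ∈ commOp γ j k X) : q.2 ≠ [] := by
  cases X <;> cases γ <;> simp only [commOp] at hq <;> split_ifs at hq <;> simp_all <;>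
    rcases hq with rfl | rfl <;> simp

lemma length_le_two_of_mem_commOp {X : FOp n} {q : FPath n} (hq : q ∈ commOp γ j k X) :
    q.2.length ≤ 2 := by
  cases X <;> cases γ <;> simp only [commOp] at hq <;> split_ifs at hq <;> simp_all <;>
    rcases hq with rfl | rfl <;> simp

lemma length_le_of_mem_commList {w : List (FOp n)} {q : FPath n} (hq : q ∈ commList γ j k w) :
    q.2.length ≤ w.length + 1 := by
  induction w generalizing q with
  | nil => simp [commList] at hq
  | cons X w ih =>
    simp only [commList, List.mem_append, List.mem_map] at hq
    rcases hq with ⟨q', hq', rfl⟩ | ⟨q', hq', rfl⟩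
    · have := length_le_two_of_mem_commOp hq'
      simp only [List.length_append, List.length_cons]
      omega
    · simpa using ih hq'

lemma endSite_isSome_of_mem_commOp {Y : FOp n} {r : Fin n} (hY : Y.annihilationSite = some r)
    {q : FPath n} (hq : q ∈ commOp γ j k Y) : (endSite q.2).isSome := by
  cases Y <;> simp only [FOp.annihilationSite, reduceCtorEq] at hY <;> cases γ <;>
    simp only [commOp] at hq <;> split_ifs at hq <;> simp_all <;>
    rcases hq with rfl | rfl <;> simp [endSite, FOp.annihilationSite]

lemma endSite_isSome_of_mem_commList {w : List (FOp n)} (hw : (endSite w).isSome) {q : FPath n}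
    (hq : q ∈ commList γ j k w) : (endSite q.2).isSome := by
  obtain ⟨r, hr⟩ := Option.isSome_iff_exists.mp hw
  obtain ⟨u, Y, rfl, hY⟩ := endSite_eq_some_iff.mp hr
  rw [commList_append, List.mem_append] at hq
  rcases hq with hq | hq <;> obtain ⟨q', hq', rfl⟩ := List.mem_map.mp hq
  · simp [endSite, hY]
  · have hq'' : q' ∈ commOp γ j k Y := by simpa [commList] using hq'
    rw [endSite_append_of_ne_nil _ (ne_nil_of_mem_commOp hq'')]
    exact endSite_isSome_of_mem_commOp hY hq''

end CommutatorShape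

lemma expandNested_cons_of_ne_nil (γ : Bool) (j k : Fin n)
    {rest : List (Bool × Fin n × Fin n)} (h : rest ≠ []) :
    expandNested ((γ, j, k) :: rest) = (expandNested rest).flatMap (commPath γ j k) := by
  cases rest with
  | nil => exact absurd rfl h
  | cons a l => rfl

lemma length_le_and_endSite_isSome_of_mem_expandNested {l : List (Bool × Fin n × Fin n)} (hl : l ≠ []) {P : FPath n}
    (hP : P ∈ expandNested l) : P.2.length ≤ l.length + 1 ∧ (endSite P.2).isSome := by
  induction l generalizing P with
  | nil => contradiction
  | cons x rest ih =>
    obtain ⟨γ, j, k⟩ := x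
    rcases eq_or_ne rest [] with rfl | hrest
    · simp only [expandNested, List.mem_singleton] at hP
      subst hP
      cases γ <;> simp [basePath, endSite, FOp.annihilationSite]
    · rw [expandNested_cons_of_ne_nil _ _ _ hrest, List.mem_flatMap] at hP
      obtain ⟨P₀, hP₀, hP⟩ := hP
      obtain ⟨q, hq, rfl⟩ := List.mem_map.mp hP
      obtain ⟨hlen, hend⟩ := ih hrest hP₀
      have := length_le_of_mem_commList hq
      refine ⟨by simp only [List.length_cons] at *; omega, ?_⟩
      exact endSite_isSome_of_mem_commList (q := q) hend hq

section PathSum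

variable {m : ℕ}

def pathSum (S : Fin (m + 1) → Finset (Fin n × Fin n)) (γ : Fin (m + 1) → Bool) :
    (FPath n → ℝ) →ₗ[ℝ] ℝ where
  toFun φ := ∑ idx ∈ Fintype.piFinset S,
    ((expandNested ((List.ofFn fun q => (γ q, idx q)).reverse)).map φ).sum
  map_add' φ ψ := by
    rw [← Finset.sum_add_distrib]
    exact Finset.sum_congr rfl fun _ _ => List.sum_map_add
  map_smul' a φ := by
    rw [RingHom.id_apply, smul_eq_mul, Finset.mul_sum]
    exact Finset.sum_congr rfl fun _ _ => List.sum_map_mul_left _ _ _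

lemma pathSum_apply (S : Fin (m + 1) → Finset (Fin n × Fin n)) (γ : Fin (m + 1) → Bool)
    (φ : FPath n → ℝ) :
    pathSum S γ φ = ∑ idx ∈ Fintype.piFinset S,
      ((expandNested ((List.ofFn fun q => (γ q, idx q)).reverse)).map φ).sum :=
  rfl

lemma pathSum_zero (S : Fin 1 → Finset (Fin n × Fin n)) (γ : Fin 1 → Bool)
    (φ : FPath n → ℝ) :
    pathSum S γ φ = ∑ e ∈ S 0, φ (basePath (γ 0) e.1 e.2) := by
  rw [pathSum_apply, Fintype.sum_piFinset_eq_sum_snoc]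
  simp [expandNested, Fin.snoc]

lemma pathSum_succ (S : Fin (m + 2) → Finset (Fin n × Fin n)) (γ : Fin (m + 2) → Bool)
    (φ : FPath n → ℝ) :
    pathSum S γ φ = ∑ e ∈ S (Fin.last _), pathSum (Fin.init S) (Fin.init γ)
      (fun P => ((commPath (γ (Fin.last _)) e.1 e.2 P).map φ).sum) := by
  rw [pathSum_apply, Fintype.sum_piFinset_eq_sum_snoc]
  refine Finset.sum_congr rfl fun e _ => ?_
  rw [pathSum_apply]
  refine Finset.sum_congr rfl fun idx _ => ?_
  rw [List.ofFn_succ', List.concat_eq_append, List.reverse_concat', Fin.snoc_last,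
    expandNested_cons_of_ne_nil _ _ _ (by simp), List.sum_map_flatMap]
  simp [Fin.init]

lemma pathSum_mono (S : Fin (m + 1) → Finset (Fin n × Fin n)) (γ : Fin (m + 1) → Bool)
    {φ ψ : FPath n → ℝ}
    (h : ∀ P : FPath n, P.2.length ≤ m + 2 → (endSite P.2).isSome → φ P ≤ ψ P) :
    pathSum S γ φ ≤ pathSum S γ ψ := by
  refine Finset.sum_le_sum fun idx _ => List.sum_le_sum fun P hP => ?_
  have hP := length_le_and_endSite_isSome_of_mem_expandNested (by simp) hP
  simp only [List.length_reverse, List.length_ofFn] at hP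
  exact h P hP.1 hP.2

lemma pathSum_sum (S : Fin (m + 1) → Finset (Fin n × Fin n)) (γ : Fin (m + 1) → Bool)
    {ι : Type*} (F : Finset ι) (φ : ι → FPath n → ℝ) :
    pathSum S γ (fun P => ∑ i ∈ F, φ i P) = ∑ i ∈ F, pathSum S γ (φ i) := by
  rw [← map_sum]
  congr 1
  ext P
  simp [Finset.sum_apply]

end PathSum

def IsRowColSparse (d : ℕ) (E : Finset (Fin n × Fin n)) : Prop :=
  ∀ a, (E.filter (·.1 = a)).card ≤ d ∧ (E.filter (·.2 = a)).card ≤ d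

def endIndicator (r : Fin n) (P : FPath n) : ℝ := if endSite P.2 = some r then 1 else 0

lemma endIndicator_of_endSite_eq {P : FPath n} {r₀ : Fin n} (h : endSite P.2 = some r₀)
    (r : Fin n) : endIndicator r P = if r₀ = r then 1 else 0 := by
  simp [endIndicator, h]

lemma endSite_basePath (γ : Bool) (j k : Fin n) : endSite (basePath γ j k).2 = some k := by
  cases γ <;> rfl

section Counting

variable {d : ℕ} {E : Finset (Fin n × Fin n)} (γ : Bool)

lemma sum_length_commOp_le (hE : IsRowColSparse d E) (X : FOp n) :
    ∑ e ∈ E, (commOp γ e.1 e.2 X).length ≤ 2 * d :=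
  calc ∑ e ∈ E, (commOp γ e.1 e.2 X).length
      ≤ ∑ e ∈ E, ((if e.1 = X.site then 1 else 0) + (if e.2 = X.site then 1 else 0)) :=
        Finset.sum_le_sum fun e _ => length_commOp_le X
    _ = (E.filter (·.1 = X.site)).card + (E.filter (·.2 = X.site)).card := by
        rw [Finset.sum_add_distrib, Finset.sum_boole, Finset.sum_boole, Nat.cast_id, Nat.cast_id]
    _ ≤ 2 * d := by linarith [(hE X.site).1, (hE X.site).2]

lemma sum_length_commList_le (hE : IsRowColSparse d E) (w : List (FOp n)) :
    ∑ e ∈ E, (commList γ e.1 e.2 w).length ≤ 2 * d * w.length := by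
  induction w with
  | nil => simp [commList]
  | cons X w ih =>
    simp only [commList, List.length_append, List.length_map, Finset.sum_add_distrib,
      List.length_cons]
    linarith [sum_length_commOp_le γ hE X]

/-- The terms of `[H_{jk}, A_{r₀}]` and `[H_{jk}, N_{r₀}]` end at `r₀` when `k = r₀`, and at `k`
when `j = r₀`. -/
lemma sum_endIndicator_commOp_le {Y : FOp n} {r₀ : Fin n} (hY : Y.annihilationSite = some r₀)
    (j k r : Fin n) :
    ((commOp γ j k Y).map (endIndicator r)).sum ≤
      (if k = r₀ then 1 else 0) * (if r₀ = r then 1 else 0) +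
        (if k = r then (if r₀ = j then 1 else 0) else 0) := by
  cases Y <;> simp only [FOp.annihilationSite, reduceCtorEq, Option.some.injEq] at hY <;>
    subst hY <;> cases γ <;>
    simp only [commOp, if_true, Bool.false_eq_true, if_false] <;> split_ifs <;>
    simp [endIndicator, endSite, FOp.annihilationSite] <;> split_ifs <;> subst_vars <;> simp_all

lemma sum_sum_endIndicator_commOp_le (hE : IsRowColSparse d E) {Y : FOp n} {r₀ : Fin n}
    (hY : Y.annihilationSite = some r₀) (r : Fin n) :
    ∑ e ∈ E, ((commOp γ e.1 e.2 Y).map (endIndicator r)).sum ≤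
      d * (if r₀ = r then 1 else 0) +
        ∑ e ∈ E.filter (·.2 = r), if r₀ = e.1 then 1 else 0 := by
  refine (Finset.sum_le_sum fun e _ => sum_endIndicator_commOp_le γ hY e.1 e.2 r).trans ?_
  have hcard : ((E.filter (·.2 = r₀)).card : ℝ) ≤ d := by exact_mod_cast (hE r₀).2
  rw [Finset.sum_add_distrib, ← Finset.sum_mul, Finset.sum_boole, ← Finset.sum_filter]
  gcongr

lemma sum_endIndicator_commList_append {u : List (FOp n)} {Y : FOp n} {r₀ : Fin n}
    (hY : Y.annihilationSite = some r₀) (j k r : Fin n) :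
    ((commList γ j k (u ++ [Y])).map (endIndicator r)).sum =
      (commList γ j k u).length * (if r₀ = r then 1 else 0) +
        ((commOp γ j k Y).map (endIndicator r)).sum := by
  have hend : ∀ v : List (FOp n), endSite (v ++ [Y]) = some r₀ := fun v => by
    rw [endSite_append_of_ne_nil _ (List.cons_ne_nil _ _)]
    simp [endSite, hY]
  rw [commList_append, List.map_append, List.sum_append, List.map_map, List.map_map]
  congr 1
  · have hconst : ∀ q : FPath n, endIndicator r (q.1, q.2 ++ [Y]) = if r₀ = r then 1 else 0 :=
      fun q => endIndicator_of_endSite_eq (hend q.2) r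
    simp only [Function.comp_def, hconst, List.map_const', List.sum_replicate, nsmul_eq_mul]
  · simp only [commList, List.map_nil, List.append_nil, List.map_map]
    refine congrArg List.sum (List.map_congr_left fun q hq => ?_)
    simp only [Function.comp_apply, endIndicator,
      endSite_append_of_ne_nil _ (ne_nil_of_mem_commOp hq)]

lemma sum_endIndicator_commPath_le (hE : IsRowColSparse d E) {P : FPath n}
    (hP : (endSite P.2).isSome) (r : Fin n) :
    ∑ e ∈ E, ((commPath γ e.1 e.2 P).map (endIndicator r)).sum ≤
      2 * d * P.2.length * endIndicator r P +
        ∑ e ∈ E.filter (·.2 = r), endIndicator e.1 P := by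
  obtain ⟨r₀, hr₀⟩ := Option.isSome_iff_exists.mp hP
  obtain ⟨u, Y, hw, hY⟩ := endSite_eq_some_iff.mp hr₀
  have hcomm : ∀ e : Fin n × Fin n, ((commPath γ e.1 e.2 P).map (endIndicator r)).sum =
      ((commList γ e.1 e.2 (u ++ [Y])).map (endIndicator r)).sum := fun e => by
    rw [commPath, List.map_map, ← hw]
    rfl
  simp only [hcomm, sum_endIndicator_commList_append γ hY, Finset.sum_add_distrib,
    ← Finset.sum_mul, endIndicator_of_endSite_eq hr₀, hw, List.length_append,
    List.length_singleton]
  have hlen : (∑ e ∈ E, ((commList γ e.1 e.2 u).length : ℝ)) ≤ 2 * d * u.length := by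
    exact_mod_cast sum_length_commList_le γ hE u
  have hind : (0 : ℝ) ≤ if r₀ = r then 1 else 0 := by split_ifs <;> norm_num
  have := sum_sum_endIndicator_commOp_le γ hE hY r
  push_cast
  nlinarith [mul_le_mul_of_nonneg_right hlen hind]

end Counting

theorem pathSum_endIndicator_le {d : ℕ} :
    ∀ {m : ℕ} (S : Fin (m + 1) → Finset (Fin n × Fin n)), (∀ q, IsRowColSparse d (S q)) →
      ∀ (γ : Fin (m + 1) → Bool) (r : Fin n),
        pathSum S γ (endIndicator r) ≤ (2 * m + 3 : ℝ) ^ m * (d : ℝ) ^ (m + 1)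
  | 0, S, hS, γ, r => by
    rw [pathSum_zero]
    simp only [endIndicator, endSite_basePath, Option.some.injEq, Finset.sum_boole]
    simpa using (hS 0 r).2
  | m + 1, S, hS, γ, r => by
    set B : ℝ := (2 * m + 3) ^ m * (d : ℝ) ^ (m + 1)
    have ih : ∀ r, pathSum (Fin.init S) (Fin.init γ) (endIndicator r) ≤ B :=
      pathSum_endIndicator_le (Fin.init S) (fun q => hS _) (Fin.init γ)
    have hE := hS (Fin.last _)
    have hcard : (((S (Fin.last _)).filter (·.2 = r)).card : ℝ) ≤ d := by
      exact_mod_cast (hE r).2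
    calc pathSum S γ (endIndicator r)
        = pathSum (Fin.init S) (Fin.init γ) fun P => ∑ e ∈ S (Fin.last _),
            ((commPath (γ (Fin.last _)) e.1 e.2 P).map (endIndicator r)).sum := by
          rw [pathSum_succ, pathSum_sum]
      _ ≤ pathSum (Fin.init S) (Fin.init γ) fun P => 2 * d * (m + 2) * endIndicator r P +
            ∑ e ∈ (S (Fin.last _)).filter (·.2 = r), endIndicator e.1 P := by
          refine pathSum_mono _ _ fun P hlen hend => ?_
          refine (sum_endIndicator_commPath_le _ hE hend r).trans ?_
          have hind : 0 ≤ endIndicator r P := by unfold endIndicator; positivity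
          gcongr
          exact_mod_cast hlen
      _ = 2 * d * (m + 2) * pathSum (Fin.init S) (Fin.init γ) (endIndicator r) +
            ∑ e ∈ (S (Fin.last _)).filter (·.2 = r),
              pathSum (Fin.init S) (Fin.init γ) (endIndicator e.1) := by
          rw [← pathSum_sum]
          exact map_add (pathSum _ _) ((2 * d * (m + 2) : ℝ) • endIndicator r) _ |>.trans
            (by rw [map_smul, smul_eq_mul])
      _ ≤ 2 * d * (m + 2) * B + d * B := by
          gcongr
          · exact ih r
          · exact (Finset.sum_le_sum fun e _ => ih e.1).trans (by
              rw [Finset.sum_const, nsmul_eq_mul]; gcongr)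
      _ ≤ (2 * ((m + 1 : ℕ) : ℝ) + 3) ^ (m + 1) * (d : ℝ) ^ (m + 1 + 1) := by
          have : (2 * m + 3 : ℝ) ^ m ≤ (2 * m + 5) ^ m := by gcongr; norm_num
          push_cast
          calc 2 * d * (m + 2) * B + d * B
              = (2 * m + 5) * (2 * m + 3 : ℝ) ^ m * d ^ (m + 2) := by ring
            _ ≤ (2 * m + 5) * (2 * m + 5 : ℝ) ^ m * d ^ (m + 2) := by gcongr
            _ = _ := by ring

lemma isRowColSparse_support {d : ℕ} {M : Matrix (Fin n) (Fin n) ℂ}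
    (hrow : ∀ j, (Finset.univ.filter fun k => M j k ≠ 0).card ≤ d)
    (hcol : ∀ k, (Finset.univ.filter fun j => M j k ≠ 0).card ≤ d) :
    IsRowColSparse d (Finset.univ.filter fun e : Fin n × Fin n => M e.1 e.2 ≠ 0) := by
  refine fun a => ⟨le_of_eq_of_le ?_ (hrow a), le_of_eq_of_le ?_ (hcol a)⟩
  · exact Finset.card_bij' (fun e _ => e.2) (fun k _ => (a, k))
      (by aesop) (by aesop) (by aesop) (by aesop)
  · exact Finset.card_bij' (fun e _ => e.1) (fun j _ => (j, a))
      (by aesop) (by aesop) (by aesop) (by aesop)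

lemma FPath.norm_appM_toM_single_le (P : FPath n) (hP : (endSite P.2).isSome) (c : Config n) :
    ‖appM P.toM (EuclideanSpace.single c 1)‖ ≤
      ∑ r ∈ Finset.univ.filter (c · = true), endIndicator r P := by
  obtain ⟨r₀, hr₀⟩ := Option.isSome_iff_exists.mp hP
  have hnonneg : ∀ r ∈ Finset.univ.filter (c · = true), 0 ≤ endIndicator r P :=
    fun r _ => by unfold endIndicator; positivity
  by_cases hc : c r₀ = true
  · calc ‖appM P.toM (EuclideanSpace.single c 1)‖
        ≤ 1 := P.isContractiveMonomial_toM.norm_appM_single_le c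
      _ = endIndicator r₀ P := by simp [endIndicator, hr₀]
      _ ≤ _ := Finset.single_le_sum hnonneg (by simpa using hc)
  · rw [FPath.appM_toM_single_eq_zero hr₀ (by simpa using hc), norm_zero]
    exact Finset.sum_nonneg hnonneg

/-- **Sparse path-counting bound.** If every row and column of `τ` and `ν` has
at most `d` nonzero entries, then for any `γ ∈ {0,1}^{p+1}` and any
configuration `c` with `η` electrons, the total weight
`∑_{index tuples} ∑_{paths P} ‖P|c⟩‖` of the expansion of the nested commutator
is at most `K·η·d^{p+1}`, with `K` depending only on `p`. -/
theorem sparse_path_counting_bound (p : ℕ) :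
    ∃ K : ℝ, ∀ (n d : ℕ) (γ : Fin (p + 1) → Bool)
      (τ ν : Matrix (Fin n) (Fin n) ℂ),
      (∀ j : Fin n, (Finset.univ.filter fun k => τ j k ≠ 0).card ≤ d) →
      (∀ k : Fin n, (Finset.univ.filter fun j => τ j k ≠ 0).card ≤ d) →
      (∀ j : Fin n, (Finset.univ.filter fun k => ν j k ≠ 0).card ≤ d) →
      (∀ k : Fin n, (Finset.univ.filter fun j => ν j k ≠ 0).card ≤ d) →
      ∀ (η : ℕ) (c : Config n), wt c = η →
        ∑ idx : Fin (p + 1) → Fin n × Fin n,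
          (if ∀ q, (if γ q then τ else ν) (idx q).1 (idx q).2 ≠ 0 then
            (((expandNested ((List.ofFn fun q => (γ q, idx q)).reverse)).map
                fun P => ‖appM (FPath.toM P) (EuclideanSpace.single c 1)‖).sum)
          else 0) ≤ K * (η : ℝ) * (d : ℝ) ^ (p + 1) := by
  refine ⟨(2 * p + 3) ^ p, fun n d γ τ ν hτr hτc hνr hνc η c hc => ?_⟩
  set S : Fin (p + 1) → Finset (Fin n × Fin n) := fun q =>
    Finset.univ.filter fun e => (if γ q then τ else ν) e.1 e.2 ≠ 0
  have hS : ∀ q, IsRowColSparse d (S q) := fun q => by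
    by_cases hq : γ q
    · simpa [S, hq] using isRowColSparse_support hτr hτc
    · simpa [S, hq] using isRowColSparse_support hνr hνc
  have hocc : (Finset.univ.filter (c · = true)).card = η := hc
  refine (Fintype.sum_ite_forall_eq_sum_piFinset (M := ℝ)
    (fun q (e : Fin n × Fin n) => (if γ q then τ else ν) e.1 e.2 ≠ 0) _).trans_le ?_
  calc pathSum S γ (fun P => ‖appM P.toM (EuclideanSpace.single c 1)‖)
      ≤ pathSum S γ (fun P => ∑ r ∈ Finset.univ.filter (c · = true), endIndicator r P) :=
        pathSum_mono S γ fun P _ hP => P.norm_appM_toM_single_le hP c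
    _ = ∑ r ∈ Finset.univ.filter (c · = true), pathSum S γ (endIndicator r) :=
        pathSum_sum _ _ _ _
    _ ≤ ∑ r ∈ Finset.univ.filter (c · = true), (2 * p + 3 : ℝ) ^ p * (d : ℝ) ^ (p + 1) :=
        Finset.sum_le_sum fun r _ => pathSum_endIndicator_le S hS γ r
    _ = (2 * p + 3) ^ p * η * (d : ℝ) ^ (p + 1) := by
        rw [Finset.sum_const, hocc, nsmul_eq_mul]
        ring
end
end
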